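/- Let A : [0,T] → ℝ^{d×d} and b : [0,T] → ℝ^d be continuous, let w ∈ C([0,T]; ℝ^d), and set b̃(t) = A(t)w(t) + b(t). Define B(w)(t,ξ) = 1_{ξ>t} k₂(ξ−t)·b̃(t) for t, ξ ∈ (0,T). Then there exists a constant L > 0 such that for all r, t ∈ [0,T], ∫₀^T |B(w)(t,ξ) − B(w)(r,ξ)|² dξ ≤ L·( |t−r|^(2α−1) + |b̃(t) − b̃(r)|² ). Consequently, the map t ↦ B(w)(t,·) is continuous from [0,T] to L²((0,T); ℝ^d). -/

import Mathlib

/-!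
Write `k_r(ξ) = 1_{ξ>r} (ξ-r)^(α-1)/Γ(α)` and `β = 2α-1 > 0`. From
`k_t X - k_r Y = (k_t - k_r) X + k_r (X - Y)` the estimate reduces to two scalar bounds on `(0,T]`:
`∫ k_r² = (T-r)^β / (β Γ(α)²)`, and, for `r ≤ t`, `∫ (k_t - k_r)² ≤ 2 (t-r)^β / (β Γ(α)²)`.
The second comes from the pointwise bound `(k_t - k_r)² ≤ k_t² - k_r² + 2·1_{ξ≤t} k_r²`, which holds
because `α < 1` makes `k_r ≤ k_t` beyond `t`, and whose right side integrates exactly.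
-/

open MeasureTheory Set Real Filter

noncomputable def fracKernel (α r ξ : ℝ) : ℝ :=
  if r < ξ then (ξ - r) ^ (α - 1) / Gamma α else 0

lemma ite_smul_eq_fracKernel_smul {E : Type*} [AddCommGroup E] [Module ℝ E] (α r ξ : ℝ) (X : E) :
    (if r < ξ then ((ξ - r) ^ (α - 1) / Gamma α) • X else 0) = fracKernel α r ξ • X := by
  rw [fracKernel, ite_smul, zero_smul]

lemma integrableOn_sub_rpow {p : ℝ} (hp : -1 < p) (r b : ℝ) :
    IntegrableOn (fun ξ => (ξ - r) ^ p) (Ioc r b) := by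
  have h := (intervalIntegral.intervalIntegrable_rpow' (a := 0) (b := b - r) hp).comp_sub_right r
  simp only [zero_add, sub_add_cancel] at h
  exact h.1

lemma integral_sub_rpow {p : ℝ} (hp : -1 < p) {r b : ℝ} (hrb : r ≤ b) :
    ∫ ξ in Ioc r b, (ξ - r) ^ p = (b - r) ^ (p + 1) / (p + 1) := by
  rw [← intervalIntegral.integral_of_le hrb,
    intervalIntegral.integral_comp_sub_right (fun x => x ^ p) r, sub_self,
    integral_rpow (Or.inl hp), zero_rpow (by linarith), sub_zero]

section FracKernel

variable {α : ℝ}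

lemma measurable_fracKernel (α r : ℝ) : Measurable (fracKernel α r) :=
  Measurable.ite measurableSet_Ioi (by fun_prop) measurable_const

lemma fracKernel_nonneg (hα : 0 < α) (r ξ : ℝ) : 0 ≤ fracKernel α r ξ := by
  unfold fracKernel
  split_ifs with h
  · exact div_nonneg (rpow_nonneg (sub_nonneg.2 h.le) _) (Gamma_pos_of_pos hα).le
  · rfl

lemma fracKernel_sq (α r ξ : ℝ) :
    fracKernel α r ξ ^ 2 =
      (Ioi r).indicator (fun ξ => (ξ - r) ^ (2 * α - 2)) ξ / Gamma α ^ 2 := by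
  unfold fracKernel
  by_cases h : r < ξ
  · rw [if_pos h, indicator_of_mem (show ξ ∈ Ioi r from h), div_pow, ← rpow_natCast,
      ← rpow_mul (sub_nonneg.2 h.le)]
    ring_nf
  · simp [h]

lemma integrableOn_fracKernel_sq (hα : 1 / 2 < α) (r a b : ℝ) :
    IntegrableOn (fun ξ => fracKernel α r ξ ^ 2) (Ioc a b) := by
  simp_rw [fracKernel_sq]
  refine Integrable.div_const ?_ _
  rw [integrable_indicator_iff measurableSet_Ioi, IntegrableOn,
    Measure.restrict_restrict measurableSet_Ioi]
  exact (integrableOn_sub_rpow (by linarith) r b).mono_set fun ξ hξ => ⟨hξ.1, hξ.2.2⟩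

lemma memLp_fracKernel (hα : 1 / 2 < α) (r a b : ℝ) :
    MemLp (fracKernel α r) 2 (volume.restrict (Ioc a b)) :=
  (memLp_two_iff_integrable_sq (measurable_fracKernel α r).aestronglyMeasurable).2
    (integrableOn_fracKernel_sq hα r a b)

lemma setIntegral_fracKernel_sq (hα : 1 / 2 < α) {r T : ℝ} (hr : 0 ≤ r) (hrT : r ≤ T) :
    ∫ ξ in Ioc 0 T, fracKernel α r ξ ^ 2 =
      (T - r) ^ (2 * α - 1) / ((2 * α - 1) * Gamma α ^ 2) := by
  simp_rw [fracKernel_sq]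
  rw [integral_div, setIntegral_indicator measurableSet_Ioi, Ioc_inter_Ioi, sup_eq_right.2 hr,
    integral_sub_rpow (by linarith) hrT, show 2 * α - 2 + 1 = 2 * α - 1 by ring, div_div]

lemma fracKernel_sub_sq_le (hα : 0 < α) (hα1 : α ≤ 1) {r t : ℝ} (hrt : r ≤ t) (ξ : ℝ) :
    (fracKernel α t ξ - fracKernel α r ξ) ^ 2 ≤
      fracKernel α t ξ ^ 2 - fracKernel α r ξ ^ 2 +
        2 * (Iic t).indicator (fun ξ => fracKernel α r ξ ^ 2) ξ := by
  by_cases hξ : t < ξ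
  · have hle : fracKernel α r ξ ≤ fracKernel α t ξ := by
      simp only [fracKernel, if_pos hξ, if_pos (hrt.trans_lt hξ)]
      exact div_le_div_of_nonneg_right
        (rpow_le_rpow_of_nonpos (sub_pos.2 hξ) (by linarith) (by linarith))
        (Gamma_pos_of_pos hα).le
    rw [indicator_of_notMem (show ξ ∉ Iic t from not_le.2 hξ)]
    nlinarith [mul_nonneg (fracKernel_nonneg hα r ξ) (sub_nonneg.2 hle)]
  · have h0 : fracKernel α t ξ = 0 := if_neg hξ
    rw [indicator_of_mem (show ξ ∈ Iic t from not_lt.1 hξ), h0]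
    exact le_of_eq (by ring)

lemma setIntegral_fracKernel_sub_sq_le (hα : 1 / 2 < α) (hα1 : α ≤ 1) {r t T : ℝ}
    (hr : 0 ≤ r) (hrt : r ≤ t) (htT : t ≤ T) :
    ∫ ξ in Ioc 0 T, (fracKernel α t ξ - fracKernel α r ξ) ^ 2 ≤
      2 * ((t - r) ^ (2 * α - 1) / ((2 * α - 1) * Gamma α ^ 2)) := by
  have hint := integrableOn_fracKernel_sq hα
  have hind : ∫ ξ in Ioc 0 T, (Iic t).indicator (fun ξ => fracKernel α r ξ ^ 2) ξ =
      (t - r) ^ (2 * α - 1) / ((2 * α - 1) * Gamma α ^ 2) := by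
    rw [setIntegral_indicator measurableSet_Iic, Ioc_inter_Iic, inf_eq_right.2 htT,
      setIntegral_fracKernel_sq hα hr hrt]
  have hmono : (T - t) ^ (2 * α - 1) / ((2 * α - 1) * Gamma α ^ 2) ≤
      (T - r) ^ (2 * α - 1) / ((2 * α - 1) * Gamma α ^ 2) := by
    have hβ : 0 < 2 * α - 1 := by linarith
    have hΓ := Gamma_pos_of_pos (show 0 < α by linarith)
    gcongr
  have hdiff : IntegrableOn (fun ξ => fracKernel α t ξ ^ 2 - fracKernel α r ξ ^ 2) (Ioc 0 T) :=
    (hint t 0 T).sub (hint r 0 T)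
  have hbound_int : IntegrableOn (fun ξ => fracKernel α t ξ ^ 2 - fracKernel α r ξ ^ 2 +
      2 * (Iic t).indicator (fun ξ => fracKernel α r ξ ^ 2) ξ) (Ioc 0 T) :=
    hdiff.add (((hint r 0 T).indicator measurableSet_Iic).const_mul 2)
  calc ∫ ξ in Ioc 0 T, (fracKernel α t ξ - fracKernel α r ξ) ^ 2
      ≤ ∫ ξ in Ioc 0 T, (fracKernel α t ξ ^ 2 - fracKernel α r ξ ^ 2 +
          2 * (Iic t).indicator (fun ξ => fracKernel α r ξ ^ 2) ξ) :=
        integral_mono_of_nonneg (ae_of_all _ fun _ => sq_nonneg _) hbound_int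
          (ae_of_all _ (fracKernel_sub_sq_le (by linarith) hα1 hrt))
    _ = (T - t) ^ (2 * α - 1) / ((2 * α - 1) * Gamma α ^ 2) -
          (T - r) ^ (2 * α - 1) / ((2 * α - 1) * Gamma α ^ 2) +
          2 * ((t - r) ^ (2 * α - 1) / ((2 * α - 1) * Gamma α ^ 2)) := by
        rw [integral_add hdiff (((hint r 0 T).indicator measurableSet_Iic).const_mul 2),
          integral_sub (hint t 0 T) (hint r 0 T), integral_const_mul, hind,
          setIntegral_fracKernel_sq hα (hr.trans hrt) htT,
          setIntegral_fracKernel_sq hα hr (hrt.trans htT)]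
    _ ≤ _ := by linarith

variable {E : Type*} [NormedAddCommGroup E] [NormedSpace ℝ E]

lemma norm_smul_sub_smul_sq_le (u v : ℝ) (X Y : E) :
    ‖u • X - v • Y‖ ^ 2 ≤ 2 * ((u - v) ^ 2 * ‖X‖ ^ 2) + 2 * (v ^ 2 * ‖X - Y‖ ^ 2) := by
  have h : u • X - v • Y = (u - v) • X + v • (X - Y) := by module
  calc ‖u • X - v • Y‖ ^ 2 ≤ (|u - v| * ‖X‖ + |v| * ‖X - Y‖) ^ 2 := by
        rw [h, ← Real.norm_eq_abs, ← Real.norm_eq_abs, ← norm_smul, ← norm_smul]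
        gcongr
        exact norm_add_le _ _
    _ ≤ 2 * ((|u - v| * ‖X‖) ^ 2 + (|v| * ‖X - Y‖) ^ 2) := add_sq_le
    _ = _ := by simp only [mul_pow, sq_abs]; ring

lemma setIntegral_norm_fracKernel_smul_sub_sq_le (hα : 1 / 2 < α) (hα1 : α ≤ 1) {r t T : ℝ}
    (hr : 0 ≤ r) (hrt : r ≤ t) (htT : t ≤ T) (X Y : E) :
    ∫ ξ in Ioc 0 T, ‖fracKernel α t ξ • X - fracKernel α r ξ • Y‖ ^ 2 ≤
      (4 * ‖X‖ ^ 2 * (t - r) ^ (2 * α - 1) + 2 * ‖X - Y‖ ^ 2 * T ^ (2 * α - 1)) /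
        ((2 * α - 1) * Gamma α ^ 2) := by
  have hsq := integrableOn_fracKernel_sq hα r 0 T
  have hsub : IntegrableOn (fun ξ => (fracKernel α t ξ - fracKernel α r ξ) ^ 2) (Ioc 0 T) :=
    ((memLp_fracKernel hα t 0 T).sub (memLp_fracKernel hα r 0 T)).integrable_sq
  have hsq_le : ∫ ξ in Ioc 0 T, fracKernel α r ξ ^ 2 ≤
      T ^ (2 * α - 1) / ((2 * α - 1) * Gamma α ^ 2) := by
    have hβ : 0 < 2 * α - 1 := by linarith
    have hΓ := Gamma_pos_of_pos (show 0 < α by linarith)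
    rw [setIntegral_fracKernel_sq hα hr (hrt.trans htT)]
    gcongr <;> linarith
  calc ∫ ξ in Ioc 0 T, ‖fracKernel α t ξ • X - fracKernel α r ξ • Y‖ ^ 2
      ≤ ∫ ξ in Ioc 0 T, 2 * ((fracKernel α t ξ - fracKernel α r ξ) ^ 2 * ‖X‖ ^ 2) +
          2 * (fracKernel α r ξ ^ 2 * ‖X - Y‖ ^ 2) :=
        integral_mono_of_nonneg (ae_of_all _ fun _ => sq_nonneg _)
          (((hsub.mul_const _).const_mul 2).add ((hsq.mul_const _).const_mul 2))
          (ae_of_all _ fun ξ => norm_smul_sub_smul_sq_le _ _ X Y)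
    _ = 2 * ((∫ ξ in Ioc 0 T, (fracKernel α t ξ - fracKernel α r ξ) ^ 2) * ‖X‖ ^ 2) +
          2 * ((∫ ξ in Ioc 0 T, fracKernel α r ξ ^ 2) * ‖X - Y‖ ^ 2) := by
        rw [integral_add ((hsub.mul_const _).const_mul 2) ((hsq.mul_const _).const_mul 2),
          integral_const_mul, integral_const_mul, integral_mul_const, integral_mul_const]
    _ ≤ 2 * (2 * ((t - r) ^ (2 * α - 1) / ((2 * α - 1) * Gamma α ^ 2)) * ‖X‖ ^ 2) +
          2 * (T ^ (2 * α - 1) / ((2 * α - 1) * Gamma α ^ 2) * ‖X - Y‖ ^ 2) := by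
        gcongr
        exact setIntegral_fracKernel_sub_sq_le hα hα1 hr hrt htT
    _ = _ := by ring

lemma setIntegral_norm_fracKernel_smul_sub_sq_le_of_norm_le (hα : 1 / 2 < α) (hα1 : α ≤ 1)
    {T M : ℝ} {x : ℝ → E} (hM : ∀ s ∈ Icc 0 T, ‖x s‖ ≤ M) {r t : ℝ}
    (hr : r ∈ Icc 0 T) (ht : t ∈ Icc 0 T) :
    ∫ ξ in Ioc 0 T, ‖fracKernel α t ξ • x t - fracKernel α r ξ • x r‖ ^ 2 ≤
      (4 * M ^ 2 + 2 * T ^ (2 * α - 1)) / ((2 * α - 1) * Gamma α ^ 2) *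
        (|t - r| ^ (2 * α - 1) + ‖x t - x r‖ ^ 2) := by
  wlog hrt : r ≤ t generalizing r t
  · simpa only [norm_sub_rev, abs_sub_comm] using this ht hr (le_of_not_ge hrt)
  refine (setIntegral_norm_fracKernel_smul_sub_sq_le hα hα1 hr.1 hrt ht.2 (x t) (x r)).trans ?_
  rw [abs_of_nonneg (sub_nonneg.2 hrt), div_mul_eq_mul_div]
  have hβ : 0 < 2 * α - 1 := by linarith
  have hΓ := Gamma_pos_of_pos (show 0 < α by linarith)
  gcongr ?_ / _
  have hX : ‖x t‖ ^ 2 ≤ M ^ 2 := pow_le_pow_left₀ (norm_nonneg _) (hM t ht) 2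
  have h1 : 0 ≤ (t - r) ^ (2 * α - 1) := rpow_nonneg (sub_nonneg.2 hrt) _
  have h2 : 0 ≤ T ^ (2 * α - 1) := rpow_nonneg (ht.1.trans ht.2) _
  nlinarith [mul_le_mul_of_nonneg_right hX h1, mul_nonneg h2 h1,
    mul_nonneg (sq_nonneg M) (sq_nonneg ‖x t - x r‖)]

end FracKernel

theorem statement17_general (d : ℕ) (T α : ℝ) (hT : 0 < T)
    (hα1 : 1 / 2 < α) (hα2 : α < 1)
    (A : ℝ → EuclideanSpace ℝ (Fin d) →L[ℝ] EuclideanSpace ℝ (Fin d))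
    (hA : ContinuousOn A (Set.Icc 0 T))
    (b : ℝ → EuclideanSpace ℝ (Fin d)) (hb : ContinuousOn b (Set.Icc 0 T))
    (w : ℝ → EuclideanSpace ℝ (Fin d)) (hw : ContinuousOn w (Set.Icc 0 T)) :
    let bt : ℝ → EuclideanSpace ℝ (Fin d) := fun t => A t (w t) + b t
    (∃ L : ℝ, 0 < L ∧
      ∀ r ∈ Set.Icc (0 : ℝ) T, ∀ t ∈ Set.Icc (0 : ℝ) T,
        (∫ ξ in Set.Ioo (0 : ℝ) T,
            ‖(if t < ξ then ((ξ - t) ^ (α - 1) / Real.Gamma α) • bt t else 0) -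
              (if r < ξ then ((ξ - r) ^ (α - 1) / Real.Gamma α) • bt r else 0)‖ ^ 2) ≤
          L * (|t - r| ^ (2 * α - 1) + ‖bt t - bt r‖ ^ 2)) ∧
    (∀ t₀ ∈ Set.Icc (0 : ℝ) T,
      Filter.Tendsto
        (fun t : ℝ => ∫ ξ in Set.Ioo (0 : ℝ) T,
          ‖(if t < ξ then ((ξ - t) ^ (α - 1) / Real.Gamma α) • bt t else 0) -
            (if t₀ < ξ then ((ξ - t₀) ^ (α - 1) / Real.Gamma α) • bt t₀ else 0)‖ ^ 2)
        (nhdsWithin t₀ (Set.Icc 0 T)) (nhds 0)) := by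
  intro bt
  simp only [ite_smul_eq_fracKernel_smul, ← integral_Ioc_eq_integral_Ioo]
  have hbt : ContinuousOn bt (Icc 0 T) := (hA.clm_apply hw).add hb
  obtain ⟨M, hM⟩ := isCompact_Icc.exists_bound_of_continuousOn hbt
  have hβ : 0 < 2 * α - 1 := by linarith
  set L := (4 * M ^ 2 + 2 * T ^ (2 * α - 1)) / ((2 * α - 1) * Gamma α ^ 2)
  have hbound r (hr : r ∈ Icc 0 T) t (ht : t ∈ Icc 0 T) :=
    setIntegral_norm_fracKernel_smul_sub_sq_le_of_norm_le hα1 hα2.le hM hr ht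
  refine ⟨⟨L, by positivity, hbound⟩, fun t₀ ht₀ => ?_⟩
  have hcont : ContinuousWithinAt (fun t => L * (|t - t₀| ^ (2 * α - 1) + ‖bt t - bt t₀‖ ^ 2))
      (Icc 0 T) t₀ :=
    continuousWithinAt_const.mul
      (((continuous_sub_right t₀).abs.rpow_const fun _ => Or.inr hβ.le).continuousWithinAt.add
        (((hbt t₀ ht₀).sub continuousWithinAt_const).norm.pow 2))
  exact squeeze_zero' (Eventually.of_forall fun t => integral_nonneg fun ξ => by positivity)
    (eventually_nhdsWithin_of_forall fun t ht => hbound t₀ ht₀ t ht)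
    (by simpa [zero_rpow hβ.ne'] using hcont.tendsto)

/-- For the affine drift, with `b̃(t) = A(t)w(t) + b(t)` and
`B(w)(t,ξ) = 1_{ξ>t} k₂(ξ−t) b̃(t)`, `k₂(u) = u^(α−1)/Γ(α)`, there is a constant `L > 0` such
that `∫₀^T |B(w)(t,ξ) − B(w)(r,ξ)|² dξ ≤ L(|t−r|^(2α−1) + |b̃(t) − b̃(r)|²)` for all
`r, t ∈ [0,T]`; consequently `t ↦ B(w)(t,·)` is continuous from `[0,T]` to `L²((0,T);ℝ^d)`
(continuity expressed through the squared `L²`-distance tending to `0`). -/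
theorem statement17 (d : ℕ) (hd : 1 ≤ d) (T α : ℝ) (hT : 0 < T)
    (hα1 : 1 / 2 < α) (hα2 : α < 1)
    (A : ℝ → EuclideanSpace ℝ (Fin d) →L[ℝ] EuclideanSpace ℝ (Fin d))
    (hA : ContinuousOn A (Set.Icc 0 T))
    (b : ℝ → EuclideanSpace ℝ (Fin d)) (hb : ContinuousOn b (Set.Icc 0 T))
    (w : ℝ → EuclideanSpace ℝ (Fin d)) (hw : ContinuousOn w (Set.Icc 0 T)) :
    let bt : ℝ → EuclideanSpace ℝ (Fin d) := fun t => A t (w t) + b t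
    (∃ L : ℝ, 0 < L ∧
      ∀ r ∈ Set.Icc (0 : ℝ) T, ∀ t ∈ Set.Icc (0 : ℝ) T,
        (∫ ξ in Set.Ioo (0 : ℝ) T,
            ‖(if t < ξ then ((ξ - t) ^ (α - 1) / Real.Gamma α) • bt t else 0) -
              (if r < ξ then ((ξ - r) ^ (α - 1) / Real.Gamma α) • bt r else 0)‖ ^ 2) ≤
          L * (|t - r| ^ (2 * α - 1) + ‖bt t - bt r‖ ^ 2)) ∧
    (∀ t₀ ∈ Set.Icc (0 : ℝ) T,
      Filter.Tendsto
        (fun t : ℝ => ∫ ξ in Set.Ioo (0 : ℝ) T,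
          ‖(if t < ξ then ((ξ - t) ^ (α - 1) / Real.Gamma α) • bt t else 0) -
            (if t₀ < ξ then ((ξ - t₀) ^ (α - 1) / Real.Gamma α) • bt t₀ else 0)‖ ^ 2)
        (nhdsWithin t₀ (Set.Icc 0 T)) (nhds 0)) :=
  statement17_general d T α hT hα1 hα2 A hA b hb w hw
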